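/- (Built-in iteration error estimator for the Kačanov scheme.) In the finite discrete setting, assume additionally that φ' is continuous. Let u_n ∈ E satisfy (G u_n)_t ≠ 0 for all t ∈ T, set a_t := φ'(|(G u_n)_t|)/|(G u_n)_t| > 0, and let u_{n+1} ∈ E satisfy the linearized equation Σ_{t∈T} μ_t a_t (G u_{n+1})_t·(G w)_t = ℓ(w) for all w ∈ E. Then σ_{n+1} : T → ℝ^d defined by (σ_{n+1})_t := a_t (G u_{n+1})_t satisfies the discrete divergence constraint, and consequently J(u_{n+1}) − inf_{v ∈ E} J(v) ≤ J(u_{n+1}) + J*(σ_{n+1}). -/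

import Mathlib

open MeasureTheory

/-- The convex conjugate `φ*(r) = sup_{s ≥ 0} (r s − φ(s))`. -/
noncomputable def conj (φ : ℝ → ℝ) (r : ℝ) : ℝ :=
  ⨆ s : Set.Ici (0:ℝ), (r * (s : ℝ) - φ (s : ℝ))

/-- The right-continuous inverse `(φ')⁻¹(t) = sup {r ≥ 0 : φ'(r) ≤ t}`. -/
noncomputable def rcInv (φ' : ℝ → ℝ) (t : ℝ) : ℝ :=
  sSup {r : ℝ | 0 ≤ r ∧ φ' r ≤ t}

/-- An N-function `φ : [0,∞) → [0,∞)` with (right-continuous, non-decreasing)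
density `φ'`, modeled by functions on `ℝ` restricted to `[0,∞)`. -/
structure IsNFunction (φ φ' : ℝ → ℝ) : Prop where
  continuousOn : ContinuousOn φ (Set.Ici 0)
  convexOn : ConvexOn ℝ (Set.Ici 0) φ
  nonneg : ∀ t ∈ Set.Ici (0:ℝ), 0 ≤ φ t
  deriv_nonneg : ∀ t ∈ Set.Ici (0:ℝ), 0 ≤ φ' t
  deriv_mono : MonotoneOn φ' (Set.Ici 0)
  deriv_rightCont : ∀ t ∈ Set.Ici (0:ℝ), ContinuousWithinAt φ' (Set.Ici t) t
  eq_integral : ∀ t ∈ Set.Ici (0:ℝ), φ t = ∫ s in (0:ℝ)..t, φ' s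
  deriv_zero : φ' 0 = 0
  deriv_pos : ∀ t > (0:ℝ), 0 < φ' t
  deriv_tendsto : Filter.Tendsto φ' Filter.atTop Filter.atTop

/-!
The flux `σ = a • G u_{n+1}` satisfies the divergence constraint because this is literally the
linearized equation. For such a flux, the Fenchel–Young inequality `r s ≤ φ s + φ* r`
applied at every element and summed against `μ` gives `ℓ v ≤ Σ μ φ(|G v|) + J*(σ)`, i.e. the weak
duality `-J*(σ) ≤ J(v)` for every `v`, hence `-J*(σ) ≤ inf J`. Fenchel–Young only needs `φ*` to
be finite, which holds because `φ' → ∞` makes `φ` superlinear.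
-/

namespace IsNFunction

variable {φ φ' : ℝ → ℝ}

theorem intervalIntegrable_deriv (hN : IsNFunction φ φ') {a b : ℝ} (ha : 0 ≤ a) (hb : 0 ≤ b) :
    IntervalIntegrable φ' volume a b :=
  (hN.deriv_mono.mono fun _ hx => le_trans (le_min ha hb) hx.1).intervalIntegrable

theorem sub_eq_integral_deriv (hN : IsNFunction φ φ') {a b : ℝ} (ha : 0 ≤ a) (hb : 0 ≤ b) :
    φ b - φ a = ∫ s in a..b, φ' s := by
  rw [hN.eq_integral b hb, hN.eq_integral a ha, ← intervalIntegral.integral_add_adjacent_intervals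
    (hN.intervalIntegrable_deriv le_rfl ha) (hN.intervalIntegrable_deriv ha hb)]
  ring

theorem bddAbove_range_mul_sub (hN : IsNFunction φ φ') (r : ℝ) :
    BddAbove (Set.range fun s : Set.Ici (0 : ℝ) => r * s - φ s) := by
  obtain ⟨s₀, hs₀⟩ := Filter.eventually_atTop.mp (hN.deriv_tendsto.eventually_ge_atTop r)
  obtain ⟨s₁, hs₁, hslope⟩ : ∃ s₁, 0 ≤ s₁ ∧ ∀ x ≥ s₁, r ≤ φ' x :=
    ⟨max s₀ 0, le_max_right _ _, fun x hx => hs₀ x ((le_max_left _ _).trans hx)⟩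
  refine ⟨|r| * s₁, ?_⟩
  rintro _ ⟨⟨u, hu : 0 ≤ u⟩, rfl⟩
  dsimp only
  rcases le_total u s₁ with hus | hsu
  · have : r * u ≤ |r| * s₁ :=
      (mul_le_mul_of_nonneg_right (le_abs_self r) hu).trans
        (mul_le_mul_of_nonneg_left hus (abs_nonneg r))
    linarith [hN.nonneg u hu]
  · have hgrowth : (u - s₁) * r ≤ φ u - φ s₁ := by
      rw [hN.sub_eq_integral_deriv hs₁ hu]
      simpa using intervalIntegral.integral_mono_on hsu intervalIntegrable_const
        (hN.intervalIntegrable_deriv hs₁ hu) fun x hx => hslope x hx.1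
    linarith [hN.nonneg s₁ hs₁, mul_le_mul_of_nonneg_right (le_abs_self r) hs₁]

theorem mul_le_add_conj (hN : IsNFunction φ φ') (r : ℝ) {s : ℝ} (hs : 0 ≤ s) :
    r * s ≤ φ s + conj φ r := by
  have := le_ciSup (hN.bddAbove_range_mul_sub r) ⟨s, hs⟩
  rw [conj]
  linarith

theorem sum_inner_le_sum_add_conj (hN : IsNFunction φ φ') {T F : Type*} [Fintype T]
    [NormedAddCommGroup F] [InnerProductSpace ℝ F] {μ : T → ℝ} (hμ : ∀ t, 0 ≤ μ t)
    (τ x : T → F) :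
    ∑ t, μ t * (inner ℝ (τ t) (x t) : ℝ) ≤
      (∑ t, μ t * φ ‖x t‖) + ∑ t, μ t * conj φ ‖τ t‖ := by
  rw [← Finset.sum_add_distrib]
  refine Finset.sum_le_sum fun t _ => ?_
  rw [← mul_add]
  refine mul_le_mul_of_nonneg_left ?_ (hμ t)
  calc (inner ℝ (τ t) (x t) : ℝ) ≤ ‖τ t‖ * ‖x t‖ := real_inner_le_norm _ _
    _ ≤ φ ‖x t‖ + conj φ ‖τ t‖ := hN.mul_le_add_conj _ (norm_nonneg _)

end IsNFunction

theorem kacanov_error_estimator_general {d : ℕ}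
    {T : Type*} [Fintype T]
    (μ : T → ℝ) (hμ : ∀ t, 0 < μ t)
    {E : Type*} [AddCommGroup E] [Module ℝ E]
    (G : E →ₗ[ℝ] (T → EuclideanSpace ℝ (Fin d)))
    (ℓ : E →ₗ[ℝ] ℝ)
    (φ φ' : ℝ → ℝ) (hN : IsNFunction φ φ')
    (J : E → ℝ) (hJ : ∀ v, J v = (∑ t, μ t * φ ‖G v t‖) - ℓ v)
    (Jstar : (T → EuclideanSpace ℝ (Fin d)) → ℝ)
    (hJstar : ∀ τ, Jstar τ = ∑ t, μ t * conj φ ‖τ t‖)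
    (a : T → ℝ)
    (un1 : E)
    (hlin : ∀ w : E, (∑ t, μ t * (a t * (inner ℝ (G un1 t) (G w t) : ℝ))) = ℓ w)
    (σ : T → EuclideanSpace ℝ (Fin d)) (hσ : ∀ t, σ t = a t • G un1 t) :
    (∀ w : E, (∑ t, μ t * (inner ℝ (σ t) (G w t) : ℝ)) = ℓ w) ∧
    J un1 - (⨅ v : E, J v) ≤ J un1 + Jstar σ := by
  have hdiv : ∀ w : E, (∑ t, μ t * (inner ℝ (σ t) (G w t) : ℝ)) = ℓ w := fun w => by
    simp only [hσ, real_inner_smul_left, hlin]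
  have hweak : ∀ v : E, -Jstar σ ≤ J v := fun v => by
    have := hN.sum_inner_le_sum_add_conj (fun t => (hμ t).le) σ (G v)
    rw [hdiv v] at this
    rw [hJ, hJstar]
    linarith
  exact ⟨hdiv, by linarith [le_ciInf hweak]⟩

/-- built-in iteration error estimator for the Kačanov scheme. If
`u_{n+1}` solves the linearized equation with weights
`a_t = φ'(|(G u_n)_t|)/|(G u_n)_t|`, then `σ_{n+1} = a • G u_{n+1}` satisfies the
discrete divergence constraint and
`J(u_{n+1}) − inf_E J ≤ J(u_{n+1}) + J*(σ_{n+1})`. -/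
theorem kacanov_error_estimator {d : ℕ} (hd : 1 ≤ d)
    {T : Type*} [Fintype T] [Nonempty T]
    (μ : T → ℝ) (hμ : ∀ t, 0 < μ t)
    {E : Type*} [AddCommGroup E] [Module ℝ E] [FiniteDimensional ℝ E]
    (G : E →ₗ[ℝ] (T → EuclideanSpace ℝ (Fin d))) (hG : Function.Injective G)
    (ℓ : E →ₗ[ℝ] ℝ)
    (φ φ' : ℝ → ℝ) (hN : IsNFunction φ φ')
    (hcont : ContinuousOn φ' (Set.Ici 0))
    (J : E → ℝ) (hJ : ∀ v, J v = (∑ t, μ t * φ ‖G v t‖) - ℓ v)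
    (Jstar : (T → EuclideanSpace ℝ (Fin d)) → ℝ)
    (hJstar : ∀ τ, Jstar τ = ∑ t, μ t * conj φ ‖τ t‖)
    (un : E) (hun : ∀ t, G un t ≠ 0)
    (a : T → ℝ) (ha : ∀ t, a t = φ' ‖G un t‖ / ‖G un t‖)
    (un1 : E)
    (hlin : ∀ w : E, (∑ t, μ t * (a t * (inner ℝ (G un1 t) (G w t) : ℝ))) = ℓ w)
    (σ : T → EuclideanSpace ℝ (Fin d)) (hσ : ∀ t, σ t = a t • G un1 t) :
    (∀ w : E, (∑ t, μ t * (inner ℝ (σ t) (G w t) : ℝ)) = ℓ w) ∧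
    J un1 - (⨅ v : E, J v) ≤ J un1 + Jstar σ :=
  kacanov_error_estimator_general μ hμ G ℓ φ φ' hN J hJ Jstar hJstar a un1 hlin σ hσ
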